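/- (Strict monotonicity of a single Young-Laplace function in its own curvature) Let L > 0, let Γ ≥ 0 and Λ be real with Γ·L + Λ ≥ 0 (non-negative tension), let κ_a, κ_b, R_a, R_b ≥ 0 with κ_a + κ_b + R_a + R_b > 0, and let P, a_a, a_b be real constants. Let C : [−1,1] → ℝ be the scaled comb-area function defined by C(ρ) = (arcsin ρ − ρ·√(1 − ρ²))/ρ² for ρ ≠ 0 and C(0) = 0, and set S(ρ) = (L²/4)·C(ρ). Let I ⊆ (−1, 1) be an interval on which a_a + S(ρ) > 0 and a_b − S(ρ) > 0 for all ρ ∈ I, and define on I the function G(ρ) = 2·Γ·arcsin(ρ) + 2·Λ·ρ/L + (κ_a + κ_b)·S(ρ) − R_a/(S(ρ) + a_a) + R_b/(a_b − S(ρ)) − P. Then G is strictly monotonically increasing on I. -/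

import Mathlib

open Real Set

/-- The scaled comb-area function
`C(ρ) = (arcsin ρ − ρ·√(1 − ρ²))/ρ²` for `ρ ≠ 0`, `C(0) = 0`. -/
noncomputable def combC (ρ : ℝ) : ℝ :=
  if ρ = 0 then 0 else (Real.arcsin ρ - ρ * Real.sqrt (1 - ρ ^ 2)) / ρ ^ 2

/-!
Write `θ = arcsin ρ`. The tension part is
`2Γθ + 2Λρ/L = (2/L)·(ΓL·(θ − sin θ) + (ΓL + Λ)·ρ)`, monotone because `sin` is 1-Lipschitz.
The scaled comb area `C` is odd, and on `(0, 1)` its derivative is `2·(tan θ − θ)/ρ³ > 0`, so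
`C` is strictly increasing on `(−1, 1)`. Through `S = (L²/4)·C`, the area-constraint and osmotic
terms are increasing in `ρ`, and by `κa + κb + Ra + Rb > 0` at least one of them strictly.
-/

namespace Real

theorem sub_le_arcsin_sub_arcsin {x y : ℝ} (hx : -1 ≤ x) (hy : y ≤ 1) (hxy : x ≤ y) :
    y - x ≤ arcsin y - arcsin x := by
  have h := abs_sin_sub_sin_le (arcsin y) (arcsin x)
  rwa [sin_arcsin hx (hxy.trans hy), sin_arcsin (hx.trans hxy) hy,
    abs_of_nonneg (sub_nonneg.2 hxy), abs_of_nonneg (sub_nonneg.2 (arcsin_le_arcsin hxy))] at h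

theorem arcsin_lt_div_sqrt_one_sub_sq {x : ℝ} (h₀ : 0 < x) (h₁ : x < 1) :
    arcsin x < x / √(1 - x ^ 2) :=
  tan_arcsin x ▸ lt_tan (arcsin_pos.2 h₀) (arcsin_lt_pi_div_two.2 h₁)

theorem mul_sqrt_one_sub_sq_lt_arcsin {x : ℝ} (h₀ : 0 < x) (h₁ : x < 1) :
    x * √(1 - x ^ 2) < arcsin x := calc
  x * √(1 - x ^ 2) < x * 1 := by
    gcongr
    exact (sqrt_lt' one_pos).2 (by nlinarith)
  _ = sin (arcsin x) := by rw [mul_one, sin_arcsin (by linarith) h₁.le]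
  _ < arcsin x := sin_lt (arcsin_pos.2 h₀)

end Real

theorem StrictMonoOn.Ioo_of_odd {α β : Type*} [AddCommGroup α] [LinearOrder α]
    [IsOrderedAddMonoid α] [AddCommGroup β] [LinearOrder β] [IsOrderedAddMonoid β]
    {f : α → β} {a : α} (hf : StrictMonoOn f (Ico 0 a)) (hodd : Function.Odd f) :
    StrictMonoOn f (Ioo (-a) a) := by
  have hneg : ∀ x ∈ Ioo (-a) a, ∀ y ∈ Ioo (-a) a, x < y → y ≤ 0 → f x < f y := by
    intro x hx y hy hxy hy0
    have h := hf ⟨neg_nonneg.2 hy0, neg_lt.1 hy.1⟩ ⟨(neg_nonneg.2 hy0).trans (neg_lt_neg hxy).le,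
      neg_lt.1 hx.1⟩ (neg_lt_neg hxy)
    rwa [hodd, hodd, neg_lt_neg_iff] at h
  intro x hx y hy hxy
  rcases le_or_gt 0 x with hx0 | hx0
  · exact hf ⟨hx0, hx.2⟩ ⟨hx0.trans hxy.le, hy.2⟩ hxy
  rcases le_or_gt y 0 with hy0 | hy0
  · exact hneg x hx y hy hxy hy0
  have h0 : (0 : α) ∈ Ioo (-a) a := ⟨hx.1.trans hx0, hy0.trans hy.2⟩
  exact (hneg x hx 0 h0 hx0 le_rfl).trans (hf ⟨le_rfl, h0.2⟩ ⟨hy0.le, hy.2⟩ hy0)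

theorem combC_zero : combC 0 = 0 := by simp [combC]

theorem combC_neg (x : ℝ) : combC (-x) = -combC x := by
  by_cases hx : x = 0
  · simp [hx, combC_zero]
  · simp only [combC, neg_eq_zero, hx, if_false, arcsin_neg, neg_sq]
    ring

theorem combC_pos {x : ℝ} (h₀ : 0 < x) (h₁ : x < 1) : 0 < combC x := by
  rw [combC, if_neg h₀.ne']
  exact div_pos (sub_pos.2 (Real.mul_sqrt_one_sub_sq_lt_arcsin h₀ h₁)) (by positivity)

theorem hasDerivAt_combC {x : ℝ} (hx : x ∈ Ioo (-1 : ℝ) 1) (hx₀ : x ≠ 0) :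
    HasDerivAt combC (2 * (x / √(1 - x ^ 2) - arcsin x) / x ^ 3) x := by
  have hs : 0 < 1 - x ^ 2 := by nlinarith [hx.1, hx.2]
  have hsqrt := ((hasDerivAt_pow 2 x).const_sub 1).sqrt hs.ne'
  have hnum := (hasDerivAt_arcsin (by linarith [hx.1]) (by linarith [hx.2])).sub
    ((hasDerivAt_id x).mul hsqrt)
  refine ((hnum.div (hasDerivAt_pow 2 x) (pow_ne_zero 2 hx₀)).congr_deriv ?_).congr_of_eventuallyEq ?_
  · have := Real.sq_sqrt hs.le
    simp only [Pi.sub_apply, Pi.mul_apply, id_eq, Nat.cast_ofNat]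
    field_simp
    linear_combination x ^ 2 * this
  · filter_upwards [eventually_ne_nhds hx₀] with y hy
    simp [combC, hy]

theorem combC_strictMonoOn_Ioo_zero_one : StrictMonoOn combC (Ioo 0 1) := by
  have hderiv (x : ℝ) (hx : x ∈ Ioo (0 : ℝ) 1) :=
    hasDerivAt_combC ⟨by linarith [hx.1], hx.2⟩ hx.1.ne'
  refine strictMonoOn_of_hasDerivWithinAt_pos (convex_Ioo 0 1)
    (f' := fun x => 2 * (x / √(1 - x ^ 2) - arcsin x) / x ^ 3)
    (fun x hx => (hderiv x hx).continuousAt.continuousWithinAt) ?_ ?_ <;> rw [interior_Ioo]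
  · exact fun x hx => (hderiv x hx).hasDerivWithinAt
  · intro x hx
    have := sub_pos.2 (Real.arcsin_lt_div_sqrt_one_sub_sq hx.1 hx.2)
    have := hx.1
    positivity

theorem combC_strictMonoOn : StrictMonoOn combC (Ioo (-1) 1) := by
  refine StrictMonoOn.Ioo_of_odd (fun x hx y hy hxy => ?_) combC_neg
  rcases hx.1.eq_or_lt with rfl | hx₀
  · simpa [combC_zero] using combC_pos hxy hy.2
  · exact combC_strictMonoOn_Ioo_zero_one ⟨hx₀, hx.2⟩ ⟨hx₀.trans hxy, hy.2⟩ hxy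

theorem tension_monotoneOn {L Γ Λ : ℝ} (hL : 0 < L) (hΓ : 0 ≤ Γ) (htension : 0 ≤ Γ * L + Λ) :
    MonotoneOn (fun ρ => 2 * Γ * arcsin ρ + 2 * Λ * ρ / L) (Icc (-1) 1) := by
  intro x hx y hy hxy
  have hgap := sub_nonneg.2 (Real.sub_le_arcsin_sub_arcsin hx.1 hy.2 hxy)
  have hxy' := sub_nonneg.2 hxy
  have hdiff : (2 * Γ * arcsin y + 2 * Λ * y / L) - (2 * Γ * arcsin x + 2 * Λ * x / L)
      = 2 / L * (Γ * L * (arcsin y - arcsin x - (y - x)) + (Γ * L + Λ) * (y - x)) := by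
    field_simp
    ring
  have hnonneg : 0 ≤ 2 / L * (Γ * L * (arcsin y - arcsin x - (y - x)) + (Γ * L + Λ) * (y - x)) := by
    positivity
  linarith

theorem areaResponse_strictMonoOn {k Ra Rb aa ab : ℝ} (hk : 0 ≤ k) (hRa : 0 ≤ Ra) (hRb : 0 ≤ Rb)
    (hpos : 0 < k + Ra + Rb) :
    StrictMonoOn (fun s => k * s - Ra / (s + aa) + Rb / (ab - s)) (Ioo (-aa) ab) := by
  intro s hs t ht hst
  have ha : 0 < s + aa := by linarith [hs.1]
  have hb : 0 < ab - t := by linarith [ht.2]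
  have hk' : k * s ≤ k * t := mul_le_mul_of_nonneg_left hst.le hk
  have hRa' : Ra / (t + aa) ≤ Ra / (s + aa) := div_le_div_of_nonneg_left hRa ha (by linarith)
  have hRb' : Rb / (ab - s) ≤ Rb / (ab - t) := div_le_div_of_nonneg_left hRb hb (by linarith)
  dsimp only
  obtain hk₀ | hRa₀ | hRb₀ : 0 < k ∨ 0 < Ra ∨ 0 < Rb := by
    by_contra! h
    linarith [h.1, h.2.1, h.2.2]
  · linarith [mul_lt_mul_of_pos_left hst hk₀]
  · linarith [div_lt_div_of_pos_left hRa₀ ha (by linarith : s + aa < t + aa)]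
  · linarith [div_lt_div_of_pos_left hRb₀ hb (by linarith : ab - t < ab - s)]

theorem youngLaplace_strictMonoOn_general
    (L Γ Λ κa κb Ra Rb P aa ab : ℝ)
    (hL : 0 < L) (hΓ : 0 ≤ Γ) (htension : 0 ≤ Γ * L + Λ)
    (hκa : 0 ≤ κa) (hκb : 0 ≤ κb) (hRa : 0 ≤ Ra) (hRb : 0 ≤ Rb)
    (hpos : 0 < κa + κb + Ra + Rb)
    (S : ℝ → ℝ) (hS : ∀ ρ, S ρ = L ^ 2 / 4 * combC ρ)
    (I : Set ℝ) (hIsub : I ⊆ Set.Ioo (-1 : ℝ) 1)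
    (harea : ∀ ρ ∈ I, 0 < aa + S ρ ∧ 0 < ab - S ρ)
    (G : ℝ → ℝ)
    (hG : ∀ ρ, G ρ = 2 * Γ * Real.arcsin ρ + 2 * Λ * ρ / L
      + (κa + κb) * S ρ - Ra / (S ρ + aa) + Rb / (ab - S ρ) - P) :
    StrictMonoOn G I := by
  have hS_mono : StrictMonoOn S I := fun x hx y hy hxy => by
    rw [hS, hS]
    exact mul_lt_mul_of_pos_left (combC_strictMonoOn (hIsub hx) (hIsub hy) hxy) (by positivity)
  have hS_maps : MapsTo S I (Ioo (-aa) ab) := fun ρ hρ =>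
    ⟨by linarith [(harea ρ hρ).1], by linarith [(harea ρ hρ).2]⟩
  have hresponse := (areaResponse_strictMonoOn (aa := aa) (ab := ab) (add_nonneg hκa hκb) hRa hRb
    hpos).comp hS_mono hS_maps
  have htension_mono := (tension_monotoneOn hL hΓ htension).mono (hIsub.trans Ioo_subset_Icc_self)
  intro x hx y hy hxy
  have h₁ := htension_mono hx hy hxy.le
  have h₂ := hresponse hx hy hxy
  simp only [Function.comp_apply] at h₁ h₂
  rw [hG, hG]
  linarith

/-- Strict monotonicity of a single Young-Laplace function of an edge in its own
normalized curvature: with chord length `L > 0`, non-negative tension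
(`Γ ≥ 0`, `Γ·L + Λ ≥ 0`), non-negative area-constraint and osmotic coefficients
(not all zero), and the comb area `S(ρ) = (L²/4)·C(ρ)` such that both cell areas
`a_a + S(ρ)` and `a_b − S(ρ)` stay positive on an interval `I ⊆ (−1, 1)`, the
Young-Laplace function
`G(ρ) = 2Γ·arcsin ρ + 2Λρ/L + (κ_a + κ_b)·S(ρ) − R_a/(S(ρ) + a_a) + R_b/(a_b − S(ρ)) − P`
is strictly monotonically increasing on `I`. -/
theorem youngLaplace_strictMonoOn
    (L Γ Λ κa κb Ra Rb P aa ab : ℝ)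
    (hL : 0 < L) (hΓ : 0 ≤ Γ) (htension : 0 ≤ Γ * L + Λ)
    (hκa : 0 ≤ κa) (hκb : 0 ≤ κb) (hRa : 0 ≤ Ra) (hRb : 0 ≤ Rb)
    (hpos : 0 < κa + κb + Ra + Rb)
    (S : ℝ → ℝ) (hS : ∀ ρ, S ρ = L ^ 2 / 4 * combC ρ)
    (I : Set ℝ) (hIsub : I ⊆ Set.Ioo (-1 : ℝ) 1) (hIconn : I.OrdConnected)
    (harea : ∀ ρ ∈ I, 0 < aa + S ρ ∧ 0 < ab - S ρ)
    (G : ℝ → ℝ)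
    (hG : ∀ ρ, G ρ = 2 * Γ * Real.arcsin ρ + 2 * Λ * ρ / L
      + (κa + κb) * S ρ - Ra / (S ρ + aa) + Rb / (ab - S ρ) - P) :
    StrictMonoOn G I :=
  youngLaplace_strictMonoOn_general L Γ Λ κa κb Ra Rb P aa ab hL hΓ htension hκa hκb hRa hRb hpos S
    hS I hIsub harea G hG
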